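/- arXiv:1009.1022 — 2 statements merged into one kernel-verified Lean document; each statement's English description precedes it below -/
import Mathlib

section
/- Assume the Continuum Hypothesis (2^ℵ₀ = ℵ₁). Let (X, 𝓘) be a Polish ideal space and let 𝓐 ⊆ 𝓘 be a point-countable family (for every x ∈ X, the set {A ∈ 𝓐 : x ∈ A} is countable) with ⋃𝓐 = X. Then there exists a subfamily 𝓐₀ ⊆ 𝓐 such that ⋃𝓐₀ is completely 𝓘-nonmeasurable. -/
/-!
Under CH the positive Borel sets can be listed as `(B α)_{α < ω₁}`. By transfinite recursion choose,
at stage `α`, a set `A α ∈ 𝓐` and a point `y α`, both inside `B α`, avoiding the set `S α` formed by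
the earlier `A β` together with every member of `𝓐` through an earlier `y β`. By point-countability
`S α` is a countable union of sets from the ideal, so positivity of `B α` leaves room for a point
`x α ∈ B α \ S α`, covered by some `A α ∈ 𝓐`, and then for `y α ∈ B α \ (S α ∪ A α)`. The union of
the `A α` meets every `B α` (at `x α`) and misses `y α`: the earlier `A β` lie in `S α`, and a later
`A β` cannot contain `y α`, since otherwise it would lie in `S β` together with its point `x β`.
-/

open Set
open scoped Cardinal

structure IsSigmaIdeal {X : Type*} (𝓘 : Set (Set X)) : Prop where
  mono : ∀ ⦃A B : Set X⦄, A ⊆ B → B ∈ 𝓘 → A ∈ 𝓘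
  iUnion_nat_mem : ∀ f : ℕ → Set X, (∀ n, f n ∈ 𝓘) → ⋃ n, f n ∈ 𝓘
  empty_mem : ∅ ∈ 𝓘

namespace IsSigmaIdeal

variable {X ι : Type*} {𝓘 : Set (Set X)}

theorem iUnion_mem (h : IsSigmaIdeal 𝓘) [Countable ι] {f : ι → Set X} (hf : ∀ i, f i ∈ 𝓘) :
    ⋃ i, f i ∈ 𝓘 := by
  cases isEmpty_or_nonempty ι with
  | inl _ => simpa only [iUnion_of_empty] using h.empty_mem
  | inr _ =>
    obtain ⟨e, he⟩ := exists_surjective_nat ι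
    rw [← he.iUnion_comp]
    exact h.iUnion_nat_mem _ fun n => hf (e n)

theorem biUnion_mem (h : IsSigmaIdeal 𝓘) {s : Set ι} (hs : s.Countable) {f : ι → Set X}
    (hf : ∀ i ∈ s, f i ∈ 𝓘) : ⋃ i ∈ s, f i ∈ 𝓘 := by
  have := hs.to_subtype
  rw [biUnion_eq_iUnion]
  exact h.iUnion_mem fun i => hf i i.2

theorem sUnion_mem (h : IsSigmaIdeal 𝓘) {S : Set (Set X)} (hS : S.Countable) (hS𝓘 : S ⊆ 𝓘) :
    ⋃₀ S ∈ 𝓘 := by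
  rw [sUnion_eq_biUnion]
  exact h.biUnion_mem hS hS𝓘

theorem union_mem (h : IsSigmaIdeal 𝓘) {A B : Set X} (hA : A ∈ 𝓘) (hB : B ∈ 𝓘) :
    A ∪ B ∈ 𝓘 := by
  rw [union_eq_iUnion]
  exact h.iUnion_mem (Bool.forall_bool.2 ⟨hB, hA⟩)

theorem diff_nonempty (h : IsSigmaIdeal 𝓘) {B S : Set X} (hB : B ∉ 𝓘) (hS : S ∈ 𝓘) :
    (B \ S).Nonempty :=
  sdiff_nonempty.2 fun hBS => hB (h.mono hBS hS)

end IsSigmaIdeal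

theorem WellFoundedLT.exists_forall_choice {ι σ : Type*} [Preorder ι] [WellFoundedLT ι]
    (P : (α : ι) → (Iio α → σ) → σ → Prop) (h : ∀ α p, ∃ s, P α p s) :
    ∃ g : ι → σ, ∀ α, P α (fun β => g β) (g α) := by
  choose F hF using h
  refine ⟨wellFounded_lt.fix fun α q => F α fun β => q β β.2, fun α => ?_⟩
  rw [WellFounded.fix_eq]
  exact hF _ _

theorem MeasurableSpace.mk_measurableSet_le_continuum (X : Type*) [MeasurableSpace X]
    [MeasurableSpace.CountablyGenerated X] : #{B : Set X | MeasurableSet B} ≤ 𝔠 := by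
  rw [← generateFrom_countableGeneratingSet (α := X)]
  exact cardinal_measurableSet_le_continuum
    ((Cardinal.le_aleph0_iff_set_countable.2 countable_countableGeneratingSet).trans
      Cardinal.aleph0_le_continuum)

section PointCountableCover

variable {X ι : Type*} {𝓘 𝓐 : Set (Set X)}

def forbiddenSet (𝓐 : Set (Set X)) (p : ι → 𝓐 × X) : Set X :=
  ⋃ β, ((p β).1 ∪ ⋃₀ {A | A ∈ 𝓐 ∧ (p β).2 ∈ A})

theorem forbiddenSet_mem [Countable ι] (h𝓘 : IsSigmaIdeal 𝓘) (h𝓐 : 𝓐 ⊆ 𝓘)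
    (hpc : ∀ x : X, {A | A ∈ 𝓐 ∧ x ∈ A}.Countable) (p : ι → 𝓐 × X) :
    forbiddenSet 𝓐 p ∈ 𝓘 :=
  h𝓘.iUnion_mem fun β =>
    h𝓘.union_mem (h𝓐 (p β).1.2) (h𝓘.sUnion_mem (hpc _) fun _ hA => h𝓐 hA.1)

theorem exists_mem_inter_diff_nonempty_and_mem_diff (h𝓘 : IsSigmaIdeal 𝓘) (h𝓐 : 𝓐 ⊆ 𝓘)
    (hcov : ⋃₀ 𝓐 = univ) {B S : Set X} (hB : B ∉ 𝓘) (hS : S ∈ 𝓘) :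
    ∃ s : 𝓐 × X, ((s.1 : Set X) ∩ (B \ S)).Nonempty ∧ s.2 ∈ B \ (S ∪ s.1) := by
  obtain ⟨x, hx⟩ := h𝓘.diff_nonempty hB hS
  obtain ⟨A, hA, hxA⟩ := mem_sUnion.1 (hcov ▸ mem_univ x)
  obtain ⟨y, hy⟩ := h𝓘.diff_nonempty hB (h𝓘.union_mem hS (h𝓐 hA))
  exact ⟨(⟨A, hA⟩, y), ⟨x, hxA, hx⟩, hy⟩

theorem exists_subset_sUnion_inter_nonempty_and_diff_nonempty [LinearOrder ι] [WellFoundedLT ι]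
    (hι : ∀ α : ι, (Iio α).Countable) (h𝓘 : IsSigmaIdeal 𝓘) (h𝓐 : 𝓐 ⊆ 𝓘)
    (hpc : ∀ x : X, {A | A ∈ 𝓐 ∧ x ∈ A}.Countable) (hcov : ⋃₀ 𝓐 = univ)
    (B : ι → Set X) (hB : ∀ α, B α ∉ 𝓘) :
    ∃ 𝓐₀ ⊆ 𝓐, ∀ α, (⋃₀ 𝓐₀ ∩ B α).Nonempty ∧ (B α \ ⋃₀ 𝓐₀).Nonempty := by
  obtain ⟨g, hg⟩ := WellFoundedLT.exists_forall_choice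
    (fun α p s => ((s.1 : Set X) ∩ (B α \ forbiddenSet 𝓐 p)).Nonempty ∧
      s.2 ∈ B α \ (forbiddenSet 𝓐 p ∪ s.1))
    fun α p =>
      have := (hι α).to_subtype
      exists_mem_inter_diff_nonempty_and_mem_diff h𝓘 h𝓐 hcov (hB α) (forbiddenSet_mem h𝓘 h𝓐 hpc p)
  refine ⟨range fun α => (g α).1, range_subset_iff.2 fun α => (g α).1.2, fun α => ⟨?_, ?_⟩⟩
  · obtain ⟨x, hxA, hxB, -⟩ := (hg α).1
    exact ⟨x, mem_sUnion_of_mem hxA (mem_range_self α), hxB⟩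
  · obtain ⟨hyB, hy⟩ := (hg α).2
    refine ⟨(g α).2, hyB, ?_⟩
    rintro ⟨_, ⟨β, rfl⟩, hyβ⟩
    rcases lt_trichotomy β α with hβα | rfl | hαβ
    · exact hy (Or.inl (mem_iUnion.2 ⟨⟨β, hβα⟩, Or.inl hyβ⟩))
    · exact hy (Or.inr hyβ)
    · obtain ⟨x, hxA, -, hx⟩ := (hg β).1
      exact hx (mem_iUnion.2 ⟨⟨α, hαβ⟩, Or.inr ⟨(g β).1, ⟨(g β).1.2, hyβ⟩, hxA⟩⟩)

end PointCountableCover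

theorem countable_Iio_toType_ord_aleph_one (α : (ℵ₁ : Cardinal.{0}).ord.ToType) :
    (Iio α).Countable := by
  rw [← Cardinal.le_aleph0_iff_set_countable, ← Cardinal.lt_aleph_one_iff]
  simpa using Cardinal.mk_Iio_lt α (by simp)

theorem stmt_2_general {X : Type} [TopologicalSpace X] [PolishSpace X] [Uncountable X]
    [MeasurableSpace X] [BorelSpace X]
    (hCH : Cardinal.continuum = Cardinal.aleph 1)
    (𝓘 : Set (Set X))
    (hDown : ∀ A B : Set X, A ⊆ B → B ∈ 𝓘 → A ∈ 𝓘)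
    (hUnion : ∀ f : ℕ → Set X, (∀ n, f n ∈ 𝓘) → (⋃ n, f n) ∈ 𝓘)
    (hProper : (univ : Set X) ∉ 𝓘)
    (hSing : ∀ x : X, ({x} : Set X) ∈ 𝓘)
    (𝓐 : Set (Set X)) (h𝓐 : 𝓐 ⊆ 𝓘)
    (hpc : ∀ x : X, {A | A ∈ 𝓐 ∧ x ∈ A}.Countable)
    (hcov : ⋃₀ 𝓐 = univ) :
    ∃ 𝓐₀ ⊆ 𝓐, ∀ B : Set X, MeasurableSet B → B ∉ 𝓘 →
      (⋃₀ 𝓐₀ ∩ B).Nonempty ∧ (B \ ⋃₀ 𝓐₀).Nonempty := by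
  have h𝓘 : IsSigmaIdeal 𝓘 :=
    ⟨fun A B => hDown A B, hUnion, hDown _ _ (empty_subset _) (hSing (Classical.arbitrary X))⟩
  let Pos := {B : Set X | MeasurableSet B ∧ B ∉ 𝓘}
  have hPos : #Pos ≤ #(ℵ₁ : Cardinal.{0}).ord.ToType := by
    have hCH₀ : 𝔠 = (ℵ₁ : Cardinal.{0}) := Cardinal.lift_injective (by simpa using hCH)
    rw [Cardinal.mk_ord_toType, ← hCH₀]
    exact (Cardinal.mk_le_mk_of_subset fun _ hB => hB.1).trans
      (MeasurableSpace.mk_measurableSet_le_continuum X)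
  obtain ⟨f⟩ := hPos
  have : Nonempty Pos := ⟨⟨univ, MeasurableSet.univ, hProper⟩⟩
  obtain ⟨e, he⟩ : ∃ e : _ → Pos, e.Surjective := ⟨_, Function.invFun_surjective f.injective⟩
  obtain ⟨𝓐₀, h𝓐₀, hsplit⟩ := exists_subset_sUnion_inter_nonempty_and_diff_nonempty
    countable_Iio_toType_ord_aleph_one h𝓘 h𝓐 hpc hcov (fun α => e α) fun α => (e α).2.2
  refine ⟨𝓐₀, h𝓐₀, fun B hBm hB => ?_⟩
  obtain ⟨α, hα⟩ := he ⟨B, hBm, hB⟩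
  simpa only [hα] using hsplit α

theorem stmt_2 {X : Type} [TopologicalSpace X] [PolishSpace X] [Uncountable X]
    [MeasurableSpace X] [BorelSpace X]
    (hCH : Cardinal.continuum = Cardinal.aleph 1)
    (𝓘 : Set (Set X))
    (hDown : ∀ A B : Set X, A ⊆ B → B ∈ 𝓘 → A ∈ 𝓘)
    (hUnion : ∀ f : ℕ → Set X, (∀ n, f n ∈ 𝓘) → (⋃ n, f n) ∈ 𝓘)
    (hProper : (univ : Set X) ∉ 𝓘)
    (hSing : ∀ x : X, ({x} : Set X) ∈ 𝓘)
    (hBase : ∀ A ∈ 𝓘, ∃ B : Set X, A ⊆ B ∧ MeasurableSet B ∧ B ∈ 𝓘)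
    (𝓐 : Set (Set X)) (h𝓐 : 𝓐 ⊆ 𝓘)
    (hpc : ∀ x : X, {A | A ∈ 𝓐 ∧ x ∈ A}.Countable)
    (hcov : ⋃₀ 𝓐 = univ) :
    ∃ 𝓐₀ ⊆ 𝓐, ∀ B : Set X, MeasurableSet B → B ∉ 𝓘 →
      (⋃₀ 𝓐₀ ∩ B).Nonempty ∧ (B \ ⋃₀ 𝓐₀).Nonempty :=
  stmt_2_general hCH 𝓘 hDown hUnion hProper hSing 𝓐 h𝓐 hpc hcov
end

section
/- Let (X, 𝓘) be a Polish ideal space with 𝓘 c.c.c. and Y a Polish space. Let F : X → Set(Y) be a multifunction such that: (i) {x ∈ X : F(x) ∩ U ≠ ∅} belongs to the 𝓘-completion B̄(X) for every open U ⊆ Y; (ii) F(x) is finite and nonempty for every x ∈ X; (iii) {x ∈ X : y ∈ F(x)} ∈ 𝓘 for every y ∈ Y. Then there exists a set T ⊆ Y such that F⁻¹(T) = {x ∈ X : F(x) ∩ T ≠ ∅} is completely 𝓘-nonmeasurable. -/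
/-!
The σ-ideal is replaced by its dual filter of co-null sets, so that null means `∀ᶠ`, positive
means `∃ᶠ`, and the completion becomes `eventuallyMeasurableSpace`.

Fix a positive Borel set `B` and a set `R ⊆ Y` of fewer than `𝔠` points. Modulo a null Borel set,
the sets `{x | F x ⊆ U}`, for `U` in a countable family of open sets separating finite sets, are
Borel; refining the Polish topology of `X` makes them open, so that `F` is upper semicontinuous on
a positive closed set `P ⊆ B`. In a positive closed set `C ⊆ P` almost every point is a cluster
point of the positive part of `C`, and as the fibres of `F` are null, two such points can be
chosen with disjoint values; small closed neighbourhoods of them in `C` are again positive and,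
by upper semicontinuity, still have disjoint values. Iterating gives a Cantor scheme, hence `𝔠`
points of `B` with pairwise disjoint finite values, and one of them has no value in `R`.

Enumerating the positive Borel sets in order type `𝔠`, a Bernstein-type recursion then chooses in
each of them a point with all values in `T` and a point with no value in `T`.
-/

open Set Filter Topology MeasureTheory Cardinal Function Metric TopologicalSpace
open scoped ENNReal

universe u

theorem Filter.eventually_clusterPt {Z : Type*} [TopologicalSpace Z]
    [HereditarilyLindelofSpace Z] (f : Filter Z) [CountableInterFilter f] :
    ∀ᶠ z in f, ClusterPt z f := by
  have := (HereditarilyLindelofSpace.isLindelof {z | ¬ClusterPt z f}).compl_mem_sets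
    fun z hz => by rw [not_neBot.1 hz]; exact mem_bot
  simp only [compl_ofPred, not_not] at this
  exact this

section CantorFamily

variable {Z : Type*} {l : Filter Z} [CountableInterFilter l] {P : Set Z} {s : Z → Z → Prop}

theorem exists_closed_split [PseudoEMetricSpace Z] [HereditarilyLindelofSpace Z]
    (hs : ∀ z ∈ P, ∀ z' ∈ P, s z z' → ∀ᶠ p in 𝓝 z ×ˢ 𝓝 z', p.1 ∈ P → p.2 ∈ P → s p.1 p.2)
    (hsec : ∀ z ∈ P, ∀ᶠ z' in l, s z z') {C : Set Z} (hCc : IsClosed C) (hCP : C ⊆ P)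
    (hC : ∃ᶠ z in l, z ∈ C) {ε : ℝ≥0∞} (hε : 0 < ε) :
    ∃ C₀ C₁ : Set Z, (IsClosed C₀ ∧ C₀ ⊆ C ∧ (∃ᶠ z in l, z ∈ C₀) ∧ ediam C₀ ≤ ε) ∧
      (IsClosed C₁ ∧ C₁ ⊆ C ∧ (∃ᶠ z in l, z ∈ C₁) ∧ ediam C₁ ≤ ε) ∧
      ∀ a ∈ C₀, ∀ a' ∈ C₁, s a a' := by
  have piece : ∀ z, ClusterPt z (l ⊓ 𝓟 C) → ∀ N ∈ 𝓝 z, ∃ C' ⊆ N,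
      IsClosed C' ∧ C' ⊆ C ∧ (∃ᶠ w in l, w ∈ C') ∧ ediam C' ≤ ε := by
    intro z hz N hN
    obtain ⟨δ, hδ, hδN⟩ := nhds_basis_closedEBall.mem_iff.1
      (inter_mem hN (closedEBall_mem_nhds z (ENNReal.half_pos hε.ne')))
    refine ⟨C ∩ closedEBall z δ, inter_subset_right.trans (hδN.trans inter_subset_left),
      hCc.inter isClosed_closedEBall, inter_subset_left,
      frequently_inf_principal.1 (hz.frequently (closedEBall_mem_nhds z hδ)), ?_⟩
    calc ediam (C ∩ closedEBall z δ) ≤ ediam (closedEBall z (ε / 2)) :=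
          ediam_mono (inter_subset_right.trans (hδN.trans inter_subset_right))
      _ ≤ 2 * (ε / 2) := ediam_closedEBall_le
      _ = ε := ENNReal.mul_div_cancel two_ne_zero ENNReal.ofNat_ne_top
  have := frequently_mem_iff_neBot.1 hC
  have hcl : ∀ᶠ z in l ⊓ 𝓟 C, ClusterPt z (l ⊓ 𝓟 C) ∧ z ∈ C :=
    (eventually_clusterPt _).and (mem_inf_of_right (mem_principal_self C))
  obtain ⟨z₀, hz₀, hz₀C⟩ := hcl.exists
  obtain ⟨z₁, ⟨hz₁, hz₁C⟩, hs₀₁⟩ := (hcl.and ((hsec z₀ (hCP hz₀C)).filter_mono inf_le_left)).exists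
  obtain ⟨U, hU, V, hV, hUV⟩ := mem_prod_iff.1 (hs z₀ (hCP hz₀C) z₁ (hCP hz₁C) hs₀₁)
  obtain ⟨C₀, hC₀U, hC₀⟩ := piece z₀ hz₀ U hU
  obtain ⟨C₁, hC₁V, hC₁⟩ := piece z₁ hz₁ V hV
  exact ⟨C₀, C₁, hC₀, hC₁, fun a ha a' ha' =>
    hUV (mk_mem_prod (hC₀U ha) (hC₁V ha')) (hCP (hC₀.2.1 ha)) (hCP (hC₁.2.1 ha'))⟩

theorem CantorScheme.pairwise_inducedMap {A : List Bool → Set Z} (hsymm : ∀ z z', s z z' → s z' z)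
    (hA : ∀ w, ∀ a ∈ A (false :: w), ∀ a' ∈ A (true :: w), s a a') :
    Pairwise (s on (CantorScheme.inducedMap A).2) := by
  rintro ⟨b, hb⟩ ⟨b', hb'⟩ hbb'
  set n := PiNat.firstDiff b b'
  have hres : PiNat.res b n = PiNat.res b' n :=
    PiNat.res_eq_res.2 fun m hm => PiNat.apply_eq_of_lt_firstDiff hm
  have h₁ : _ ∈ A (b n :: PiNat.res b n) := CantorScheme.map_mem ⟨b, hb⟩ (n + 1)
  have h₂ : (CantorScheme.inducedMap A).2 ⟨b', hb'⟩ ∈ A (b' n :: PiNat.res b n) := by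
    rw [hres]
    exact CantorScheme.map_mem ⟨b', hb'⟩ (n + 1)
  have hne : b n ≠ b' n := PiNat.apply_firstDiff_ne fun h => hbb' (Subtype.ext h)
  revert h₁ h₂ hne
  cases b n <;> cases b' n <;> intro h₁ h₂ hne
  · exact absurd rfl hne
  · exact hA _ _ h₁ _ h₂
  · exact hsymm _ _ (hA _ _ h₂ _ h₁)
  · exact absurd rfl hne

theorem exists_cantor_family [TopologicalSpace Z] [PolishSpace Z] (hP : IsClosed P)
    (hPl : ∃ᶠ z in l, z ∈ P) (hsymm : ∀ z z', s z z' → s z' z)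
    (hs : ∀ z ∈ P, ∀ z' ∈ P, s z z' → ∀ᶠ p in 𝓝 z ×ˢ 𝓝 z', p.1 ∈ P → p.2 ∈ P → s p.1 p.2)
    (hsec : ∀ z ∈ P, ∀ᶠ z' in l, s z z') :
    ∃ c : (ℕ → Bool) → Z, (∀ b, c b ∈ P) ∧ Pairwise (s on c) := by
  let := TopologicalSpace.upgradeIsCompletelyMetrizable Z
  let Node := {C : Set Z // IsClosed C ∧ C ⊆ P ∧ ∃ᶠ z in l, z ∈ C}
  choose C₀ C₁ h₀ h₁ hsep using fun (C : Node) (n : ℕ) =>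
    exists_closed_split hs hsec C.2.1 C.2.2.1 C.2.2.2
      (ENNReal.inv_pos.2 (ENNReal.natCast_ne_top (n + 1)))
  let D : List Bool → Node := fun w => List.rec ⟨P, hP, subset_rfl, hPl⟩ (fun a w C =>
    bif a then ⟨C₁ C w.length, (h₁ C _).1, (h₁ C _).2.1.trans C.2.2.1, (h₁ C _).2.2.1⟩
    else ⟨C₀ C w.length, (h₀ C _).1, (h₀ C _).2.1.trans C.2.2.1, (h₀ C _).2.2.1⟩) w
  have hanti : CantorScheme.ClosureAntitone fun w => (D w).1 :=
    CantorScheme.Antitone.closureAntitone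
      (fun w a => by cases a; exacts [(h₀ _ _).2.1, (h₁ _ _).2.1]) fun w => (D w).2.1
  have hdiam_le : ∀ w, ediam (D w).1 ≤ (w.length : ℝ≥0∞)⁻¹ := by
    rintro (_ | ⟨(_ | _), w⟩)
    · simp
    · exact (h₀ _ _).2.2.2
    · exact (h₁ _ _).2.2.2
  have hdiam : CantorScheme.VanishingDiam fun w => (D w).1 := fun b =>
    tendsto_of_tendsto_of_tendsto_of_le_of_le tendsto_const_nhds
      ENNReal.tendsto_inv_nat_nhds_zero (fun _ => bot_le)
      fun n => by simpa only [PiNat.res_length] using hdiam_le (PiNat.res b n)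
  have htotal := hanti.map_of_vanishingDiam hdiam fun w => (D w).2.2.2.exists
  let c : (ℕ → Bool) → Z := fun b =>
    (CantorScheme.inducedMap fun w => (D w).1).2 ⟨b, htotal ▸ mem_univ b⟩
  exact ⟨c, fun b => CantorScheme.map_mem _ 0, fun b b' hbb' =>
    CantorScheme.pairwise_inducedMap hsymm (fun w => hsep _ _)
      fun h => hbb' (congrArg Subtype.val h)⟩

end CantorFamily

theorem Set.Finite.inter_iInter_nonempty_iff {Y : Type*} {s : Set Y} (hs : s.Finite)
    {W : ℕ → Set Y} (hW : Antitone W) :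
    (s ∩ ⋂ n, W n).Nonempty ↔ ∀ n, (s ∩ W n).Nonempty := by
  refine ⟨fun h n => h.mono (inter_subset_inter_right _ (iInter_subset _ n)), fun h => ?_⟩
  by_contra hempty
  have hout : ∀ y ∈ s, ∃ n, y ∉ W n := fun y hy => by
    by_contra! hin
    exact hempty ⟨y, hy, mem_iInter.2 hin⟩
  choose! n hn using hout
  obtain ⟨N, hN⟩ := (hs.image n).bddAbove
  obtain ⟨y, hys, hyW⟩ := h N
  exact hn y hys (hW (hN (mem_image_of_mem n hys)) hyW)

theorem IsClosed.exists_antitone_isOpen {Y : Type*} [TopologicalSpace Y]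
    [PseudoMetrizableSpace Y] {C : Set Y} (hC : IsClosed C) :
    ∃ W : ℕ → Set Y, Antitone W ∧ (∀ n, IsOpen (W n)) ∧ C = ⋂ n, W n := by
  let := pseudoMetrizableSpacePseudoMetric Y
  refine ⟨fun n => thickening (1 / (n + 1 : ℝ)) C, fun m n hmn => thickening_mono
    (Nat.one_div_le_one_div (α := ℝ) hmn) C, fun n => isOpen_thickening,
    hC.closure_eq.symm.trans ?_⟩
  rw [closure_eq_iInter_thickening' C (range fun n : ℕ => 1 / (n + 1 : ℝ)), biInter_range]
  · rintro _ ⟨n, rfl⟩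
    exact Nat.one_div_pos_of_nat (α := ℝ)
  · intro ε hε
    obtain ⟨n, hn⟩ := exists_nat_one_div_lt hε
    exact ⟨_, ⟨n, rfl⟩, Nat.one_div_pos_of_nat (α := ℝ), hn.le⟩

theorem eventuallyMeasurableSet_setOf_subset {X Y : Type*} [m : MeasurableSpace X]
    {l : Filter X} [CountableInterFilter l] [TopologicalSpace Y] [PseudoMetrizableSpace Y]
    {F : X → Set Y} (hF : ∀ x, (F x).Finite)
    (hmeas : ∀ U, IsOpen U → EventuallyMeasurableSet m l {x | (F x ∩ U).Nonempty})
    {U : Set Y} (hU : IsOpen U) : EventuallyMeasurableSet m l {x | F x ⊆ U} := by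
  obtain ⟨W, hWa, hWo, hW⟩ := hU.isClosed_compl.exists_antitone_isOpen
  have : {x | F x ⊆ U} = (⋂ n, {x | (F x ∩ W n).Nonempty})ᶜ := by
    ext x
    simp only [mem_ofPred_eq, mem_compl_iff, mem_iInter,
      ← (hF x).inter_iInter_nonempty_iff hWa, ← hW, inter_compl_nonempty_iff, not_not]
  rw [this]
  exact (MeasurableSet.iInter fun n => hmeas _ (hWo n)).compl

theorem exists_countable_separating_isOpen (Y : Type*) [TopologicalSpace Y] [T2Space Y]
    [SecondCountableTopology Y] :
    ∃ 𝒰 : Set (Set Y), 𝒰.Countable ∧ (∀ U ∈ 𝒰, IsOpen U) ∧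
      ∀ s t : Set Y, s.Finite → t.Finite → Disjoint s t →
        ∃ U ∈ 𝒰, ∃ V ∈ 𝒰, s ⊆ U ∧ t ⊆ V ∧ Disjoint U V := by
  obtain ⟨b, hbc, -, hb⟩ := exists_countable_basis Y
  have shrink : ∀ s U, s.Finite → IsOpen U → s ⊆ U →
      ∃ S ∈ {S | S.Finite ∧ S ⊆ b}, s ⊆ ⋃₀ S ∧ ⋃₀ S ⊆ U := by
    intro s U hs hU hsU
    choose! v hvb hyv hvU using fun y (hy : y ∈ s) => hb.exists_subset_of_mem_open (hsU hy) hU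
    exact ⟨v '' s, ⟨hs.image v, image_subset_iff.2 hvb⟩,
      fun y hy => mem_sUnion_of_mem (hyv y hy) (mem_image_of_mem v hy),
      sUnion_subset (forall_mem_image.2 hvU)⟩
  refine ⟨sUnion '' {S | S.Finite ∧ S ⊆ b}, (countable_ofPred_finite_subset hbc).image _, ?_, ?_⟩
  · rintro _ ⟨S, ⟨-, hSb⟩, rfl⟩
    exact isOpen_sUnion fun v hv => hb.isOpen (hSb hv)
  · intro s t hs ht hst
    obtain ⟨U, V, hU, hV, hsU, htV, hUV⟩ :=
      SeparatedNhds.of_isCompact_isCompact hs.isCompact ht.isCompact hst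
    obtain ⟨S, hS, hsS, hSU⟩ := shrink s U hs hU hsU
    obtain ⟨S', hS', htS', hS'V⟩ := shrink t V ht hV htV
    exact ⟨_, mem_image_of_mem _ hS, _, mem_image_of_mem _ hS', hsS, htS', hUV.mono hSU hS'V⟩

theorem exists_polishSpace_isClosed_isOpen {X : Type*} [TopologicalSpace X] [PolishSpace X]
    [MeasurableSpace X] [BorelSpace X] {S : Set (Set X)} (hS : S.Countable)
    (hSm : ∀ s ∈ S, MeasurableSet s) :
    ∃ t : TopologicalSpace X, @PolishSpace X t ∧ ∀ s ∈ S, IsClosed[t] s ∧ IsOpen[t] s := by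
  have := hS.to_subtype
  choose m hm hpol hcl hop using fun s : S => (hSm s s.2).isClopenable
  obtain ⟨t, htm, -, ht⟩ := PolishSpace.exists_polishSpace_forall_le m hm hpol
  exact ⟨t, ht, fun s hs => ⟨(hcl ⟨s, hs⟩).mono (htm _), (hop ⟨s, hs⟩).mono (htm _)⟩⟩

theorem exists_cantor_family_pairwise_disjoint {X Y : Type*} [TopologicalSpace X]
    [PolishSpace X] {l : Filter X} [CountableInterFilter l] {F : X → Set Y}
    (hF : ∀ x, (F x).Finite) (hfib : ∀ y, ∀ᶠ x in l, y ∉ F x) {P : Set X} (hP : IsClosed P)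
    (hPl : ∃ᶠ x in l, x ∈ P) {𝒰 : Set (Set Y)}
    (h𝒰 : ∀ s t : Set Y, s.Finite → t.Finite → Disjoint s t →
      ∃ U ∈ 𝒰, ∃ V ∈ 𝒰, s ⊆ U ∧ t ⊆ V ∧ Disjoint U V)
    (husc : ∀ U ∈ 𝒰, ∀ x ∈ P, F x ⊆ U → ∀ᶠ x' in 𝓝 x, x' ∈ P → F x' ⊆ U) :
    ∃ c : (ℕ → Bool) → X, (∀ b, c b ∈ P) ∧ Pairwise (Disjoint on fun b => F (c b)) := by
  refine exists_cantor_family (s := fun x x' => Disjoint (F x) (F x')) hP hPl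
    (fun _ _ h => h.symm) (fun z hz z' hz' hzz' => ?_) fun z _ => ?_
  · obtain ⟨U, hU, V, hV, hzU, hz'V, hUV⟩ := h𝒰 _ _ (hF z) (hF z') hzz'
    filter_upwards [(husc U hU z hz hzU).prod_mk (husc V hV z' hz' hz'V)] with p hp hp₁ hp₂
    exact hUV.mono (hp.1 hp₁) (hp.2 hp₂)
  · filter_upwards [(eventually_all_finite (hF z)).2 fun y _ => hfib y] with z' hz'
    exact disjoint_left.2 hz'

theorem exists_disjoint_of_pairwise_disjoint {Y : Type u} {G : (ℕ → Bool) → Set Y}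
    (hG : Pairwise (Disjoint on G)) {R : Set Y} (hR : #R < 𝔠) : ∃ b, Disjoint (G b) R := by
  by_contra! h
  choose y hyG hyR using fun b => not_disjoint_iff.1 (h b)
  have hinj : Injective fun b => (⟨y b, hyR b⟩ : R) := fun b b' hbb' =>
    by_contra fun hne => (hG hne).ne_of_mem (hyG b) (hyG b') (congrArg Subtype.val hbb')
  have : 𝔠 ≤ #R := by simpa using lift_mk_le_lift_mk_of_injective hinj
  exact this.not_gt hR

theorem exists_mem_disjoint_of_mk_lt_continuum {X : Type*} {Y : Type u} [TopologicalSpace X]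
    [PolishSpace X] [m : MeasurableSpace X] [BorelSpace X] [TopologicalSpace Y]
    [MetrizableSpace Y] [SecondCountableTopology Y] {l : Filter X} [CountableInterFilter l]
    [l.IsMeasurablyGenerated] {F : X → Set Y} (hF : ∀ x, (F x).Finite)
    (hmeas : ∀ U, IsOpen U → EventuallyMeasurableSet m l {x | (F x ∩ U).Nonempty})
    (hfib : ∀ y, ∀ᶠ x in l, y ∉ F x) {B : Set X} (hB : MeasurableSet B)
    (hBl : ∃ᶠ x in l, x ∈ B) {R : Set Y} (hR : #R < 𝔠) : ∃ x ∈ B, Disjoint (F x) R := by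
  obtain ⟨𝒰, h𝒰c, h𝒰o, h𝒰⟩ := exists_countable_separating_isOpen Y
  choose! V hVm hV using fun U hU => eventuallyMeasurableSet_setOf_subset hF hmeas (h𝒰o U hU)
  obtain ⟨G, hGl, hGm, hG⟩ :=
    ((eventually_countable_ball h𝒰c).2 fun U hU => hV U hU).exists_measurable_mem
  -- a finer Polish topology in which `F` is upper semicontinuous on `B ∩ G`
  obtain ⟨τ, hτ, hτS⟩ := exists_polishSpace_isClosed_isOpen ((h𝒰c.image V).insert (B ∩ G))
    (by rintro s (rfl | ⟨U, hU, rfl⟩); exacts [hB.inter hGm, hVm U hU])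
  obtain ⟨c, hcP, hc⟩ := @exists_cantor_family_pairwise_disjoint X Y τ hτ l _ F hF hfib (B ∩ G)
    (hτS _ (mem_insert _ _)).1 (hBl.and_eventually hGl) 𝒰 h𝒰 fun U hU x hx hxU => by
      have hxV : x ∈ V U := (eq_iff_iff.1 (hG x hx.2 U hU)).1 hxU
      filter_upwards [(hτS _ (mem_insert_of_mem _ (mem_image_of_mem V hU))).2.mem_nhds hxV]
        with x' hx'V hx'P
      exact (eq_iff_iff.1 (hG x' hx'P.2 U hU)).2 hx'V
  obtain ⟨b, hb⟩ := exists_disjoint_of_pairwise_disjoint hc hR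
  exact ⟨c b, (hcP b).1, hb⟩

theorem mk_iUnion_lt_continuum {ι Y : Type u} (hι : #ι < 𝔠) {s : ι → Set Y}
    (hs : ∀ i, (s i).Countable) : #(⋃ i, s i) < 𝔠 :=
  (mk_iUnion_le s).trans_lt <| mul_lt_of_lt aleph0_le_continuum hι <|
    (ciSup_le' fun i => mk_le_aleph0_iff.2 (hs i).to_subtype).trans_lt aleph0_lt_continuum

theorem exists_bernstein_set {X : Type*} {Y ι : Type u} [LinearOrder ι] [WellFoundedLT ι]
    (hι : ∀ i : ι, #(Iio i) < 𝔠) {F : X → Set Y} (hF : ∀ x, (F x).Countable) {B : ι → Set X}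
    (hB : ∀ i, ∀ R : Set Y, #R < 𝔠 → ∃ x ∈ B i, Disjoint (F x) R) :
    ∃ T : Set Y, ∀ i, (∃ x ∈ B i, F x ⊆ T) ∧ ∃ x ∈ B i, Disjoint (F x) T := by
  -- Stage `i` picks `a i ∈ B i` whose values avoid those of the earlier `w j`, then
  -- `w i ∈ B i` whose values avoid those of `a i` and of the earlier `a j`;
  -- `T` collects the values of all `w i`.
  have step : ∀ i, ∀ p : ∀ j, j < i → X × X, ∃ q : X × X,
      (q.1 ∈ B i ∧ Disjoint (F q.1) (⋃ j : Iio i, F (p j j.2).2)) ∧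
      q.2 ∈ B i ∧ Disjoint (F q.2) (F q.1 ∪ ⋃ j : Iio i, F (p j j.2).1) := by
    intro i p
    obtain ⟨a, ha, haw⟩ := hB i _ (mk_iUnion_lt_continuum (hι i) fun j => hF _)
    obtain ⟨w, hw, hwa⟩ := hB i (F a ∪ ⋃ j : Iio i, F (p j j.2).1) <|
      (mk_union_le _ _).trans_lt <| add_lt_of_lt aleph0_le_continuum
        ((mk_le_aleph0_iff.2 (hF a).to_subtype).trans_lt aleph0_lt_continuum)
        (mk_iUnion_lt_continuum (hι i) fun j => hF _)
    exact ⟨(a, w), ⟨ha, haw⟩, hw, hwa⟩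
  choose g hg using step
  let p : ι → X × X := wellFounded_lt.fix g
  have hp : ∀ i, ((p i).1 ∈ B i ∧ Disjoint (F (p i).1) (⋃ j : Iio i, F (p j).2)) ∧
      (p i).2 ∈ B i ∧ Disjoint (F (p i).2) (F (p i).1 ∪ ⋃ j : Iio i, F (p j).1) := fun i => by
    rw [show p i = g i fun j _ => p j from wellFounded_lt.fix_eq g i]
    exact hg i _
  refine ⟨⋃ i, F (p i).2, fun i => ⟨⟨(p i).2, (hp i).2.1, subset_iUnion (fun i => F (p i).2) i⟩,
    (p i).1, (hp i).1.1, disjoint_iUnion_right.2 fun j => ?_⟩⟩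
  rcases lt_trichotomy j i with hji | rfl | hij
  · exact (hp i).1.2.mono_right (subset_iUnion (fun k : Iio i => F (p k).2) ⟨j, hji⟩)
  · exact ((hp j).2.2.mono_right subset_union_left).symm
  · exact ((hp j).2.2.mono_right
      ((subset_iUnion (fun k : Iio j => F (p k).1) ⟨i, hij⟩).trans subset_union_right)).symm

theorem exists_bernstein_set_of_mk_le_continuum {X Y : Type u} {F : X → Set Y}
    (hF : ∀ x, (F x).Countable) {ℬ : Set (Set X)} (hℬ : #ℬ ≤ 𝔠)
    (h : ∀ B ∈ ℬ, ∀ R : Set Y, #R < 𝔠 → ∃ x ∈ B, Disjoint (F x) R) :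
    ∃ T : Set Y, ∀ B ∈ ℬ, (∃ x ∈ B, F x ⊆ T) ∧ ∃ x ∈ B, Disjoint (F x) T := by
  rcases isEmpty_or_nonempty ℬ with hempty | hne
  · exact ⟨∅, fun B hB => (hempty.false ⟨B, hB⟩).elim⟩
  obtain ⟨e⟩ : Nonempty (ℬ ↪ (𝔠 : Cardinal.{u}).ord.ToType) := by
    rwa [← Cardinal.le_def, mk_ord_toType]
  obtain ⟨T, hT⟩ := exists_bernstein_set (fun i => by simpa using mk_Iio_lt i (by simp)) hF
    fun i => h _ (invFun e i).2
  exact ⟨T, fun B hB => by simpa [leftInverse_invFun e.injective ⟨B, hB⟩] using hT (e ⟨B, hB⟩)⟩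

theorem mk_measurableSet_le_continuum {X : Type u} [TopologicalSpace X]
    [SecondCountableTopology X] [MeasurableSpace X] [BorelSpace X] :
    #{s : Set X | MeasurableSet s} ≤ 𝔠 := by
  obtain ⟨b, hbc, -, hb⟩ := exists_countable_basis X
  rw [BorelSpace.measurable_eq (α := X), hb.borel_eq_generateFrom]
  exact MeasurableSpace.cardinal_measurableSet_le_continuum
    ((mk_le_aleph0_iff.2 hbc.to_subtype).trans aleph0_le_continuum)

theorem exists_countableInterFilter_of_sigmaIdeal {X : Type*} [MeasurableSpace X]
    (𝓘 : Set (Set X)) (hDown : ∀ A B : Set X, A ⊆ B → B ∈ 𝓘 → A ∈ 𝓘)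
    (hUnion : ∀ f : ℕ → Set X, (∀ n, f n ∈ 𝓘) → (⋃ n, f n) ∈ 𝓘) (hEmpty : ∅ ∈ 𝓘)
    (hBase : ∀ A ∈ 𝓘, ∃ B : Set X, A ⊆ B ∧ MeasurableSet B ∧ B ∈ 𝓘) :
    ∃ l : Filter X, CountableInterFilter l ∧ l.IsMeasurablyGenerated ∧
      ∀ A, A ∈ 𝓘 ↔ ∀ᶠ x in l, x ∉ A := by
  have hsUnion : ∀ S : Set (Set X), S.Countable → (∀ s ∈ S, s ∈ 𝓘) → ⋃₀ S ∈ 𝓘 := by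
    intro S hS hS𝓘
    rcases S.eq_empty_or_nonempty with rfl | hne
    · simpa using hEmpty
    obtain ⟨f, rfl⟩ := hS.exists_eq_range hne
    exact sUnion_range f ▸ hUnion f fun n => hS𝓘 _ (mem_range_self n)
  refine ⟨.ofCountableUnion 𝓘 hsUnion fun t ht s hst => hDown s t hst ht, inferInstance,
    ⟨fun s hs => ?_⟩, fun A => by simp [Filter.Eventually, ← compl_def]⟩
  obtain ⟨B, hsB, hB, hB𝓘⟩ := hBase _ hs
  exact ⟨Bᶜ, by simpa using hB𝓘, hB.compl, compl_subset_comm.1 hsB⟩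

theorem generateFrom_le_eventuallyMeasurableSpace {X : Type*} [m : MeasurableSpace X]
    {l : Filter X} [CountableInterFilter l] {𝓘 : Set (Set X)}
    (hl : ∀ A ∈ 𝓘, ∀ᶠ x in l, x ∉ A) :
    MeasurableSpace.generateFrom ({s | MeasurableSet s} ∪ 𝓘) ≤ eventuallyMeasurableSpace m l :=
  MeasurableSpace.generateFrom_le fun s hs => hs.elim MeasurableSet.eventuallyMeasurableSet
    fun hs => ⟨∅, .empty, eventuallyEq_empty.2 (hl s hs)⟩

theorem stmt_9_general {X : Type} [TopologicalSpace X] [PolishSpace X] [Uncountable X]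
    [MeasurableSpace X] [BorelSpace X]
    {Y : Type} [TopologicalSpace Y] [PolishSpace Y]
    (𝓘 : Set (Set X))
    (hDown : ∀ A B : Set X, A ⊆ B → B ∈ 𝓘 → A ∈ 𝓘)
    (hUnion : ∀ f : ℕ → Set X, (∀ n, f n ∈ 𝓘) → (⋃ n, f n) ∈ 𝓘)
    (hSing : ∀ x : X, ({x} : Set X) ∈ 𝓘)
    (hBase : ∀ A ∈ 𝓘, ∃ B : Set X, A ⊆ B ∧ MeasurableSet B ∧ B ∈ 𝓘)
    (F : X → Set Y)
    (hmeas : ∀ U : Set Y, IsOpen U →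
      MeasurableSet[MeasurableSpace.generateFrom ({s : Set X | MeasurableSet s} ∪ 𝓘)] {x : X | (F x ∩ U).Nonempty})
    (hfin : ∀ x : X, (F x).Finite ∧ (F x).Nonempty)
    (hfib : ∀ y : Y, {x : X | y ∈ F x} ∈ 𝓘) :
    ∃ T : Set Y, ∀ B : Set X, MeasurableSet B → B ∉ 𝓘 →
      ({x : X | (F x ∩ T).Nonempty} ∩ B).Nonempty ∧
        (B \ {x : X | (F x ∩ T).Nonempty}).Nonempty := by
  obtain ⟨x₀⟩ : Nonempty X := inferInstance
  obtain ⟨l, _, _, hl⟩ := exists_countableInterFilter_of_sigmaIdeal 𝓘 hDown hUnion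
    (hDown _ _ (empty_subset _) (hSing x₀)) hBase
  have hmeas' := fun U hU => generateFrom_le_eventuallyMeasurableSpace
    (fun A hA => (hl A).1 hA) _ (hmeas U hU)
  obtain ⟨T, hT⟩ := exists_bernstein_set_of_mk_le_continuum (fun x => (hfin x).1.countable)
    ((mk_le_mk_of_subset fun B hB => hB.1).trans mk_measurableSet_le_continuum)
    fun B (hB : MeasurableSet B ∧ B ∉ 𝓘) R hR =>
      exists_mem_disjoint_of_mk_lt_continuum (fun x => (hfin x).1) hmeas'
        (fun y => (hl _).1 (hfib y)) hB.1 (fun h => hB.2 ((hl B).2 h)) hR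
  refine ⟨T, fun B hB hB𝓘 => ?_⟩
  obtain ⟨⟨w, hwB, hwT⟩, a, haB, haT⟩ := hT B ⟨hB, hB𝓘⟩
  exact ⟨⟨w, (hfin w).2.mono (subset_inter subset_rfl hwT), hwB⟩,
    a, haB, not_nonempty_iff_eq_empty.2 haT.inter_eq⟩

theorem stmt_9 {X : Type} [TopologicalSpace X] [PolishSpace X] [Uncountable X]
    [MeasurableSpace X] [BorelSpace X]
    {Y : Type} [TopologicalSpace Y] [PolishSpace Y] [MeasurableSpace Y] [BorelSpace Y]
    (𝓘 : Set (Set X))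
    (hDown : ∀ A B : Set X, A ⊆ B → B ∈ 𝓘 → A ∈ 𝓘)
    (hUnion : ∀ f : ℕ → Set X, (∀ n, f n ∈ 𝓘) → (⋃ n, f n) ∈ 𝓘)
    (hProper : (univ : Set X) ∉ 𝓘)
    (hSing : ∀ x : X, ({x} : Set X) ∈ 𝓘)
    (hBase : ∀ A ∈ 𝓘, ∃ B : Set X, A ⊆ B ∧ MeasurableSet B ∧ B ∈ 𝓘)
    (hccc : ∀ 𝒟 : Set (Set X), (∀ D ∈ 𝒟, MeasurableSet D ∧ D ∉ 𝓘) →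
      𝒟.PairwiseDisjoint id → 𝒟.Countable)
    (F : X → Set Y)
    (hmeas : ∀ U : Set Y, IsOpen U →
      MeasurableSet[MeasurableSpace.generateFrom ({s : Set X | MeasurableSet s} ∪ 𝓘)] {x : X | (F x ∩ U).Nonempty})
    (hfin : ∀ x : X, (F x).Finite ∧ (F x).Nonempty)
    (hfib : ∀ y : Y, {x : X | y ∈ F x} ∈ 𝓘) :
    ∃ T : Set Y, ∀ B : Set X, MeasurableSet B → B ∉ 𝓘 →
      ({x : X | (F x ∩ T).Nonempty} ∩ B).Nonempty ∧
        (B \ {x : X | (F x ∩ T).Nonempty}).Nonempty :=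
  stmt_9_general 𝓘 hDown hUnion hSing hBase F hmeas hfin hfib
end
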